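/- Let S_n be the star graph on n ≥ 2 vertices v_1,...,v_n with center v_1 (edges {v_1,v_i} for i = 2,...,n). Then the Laplacian energies of its vertices are LE_{S_n}(v_1) = (n−1)(n² − 2n + 4)/n², and LE_{S_n}(v_k) = (n³ − n² − 2n + 4)/(n²(n−1)) for every k ≥ 2. -/

import Mathlib

/-!
Let `P₁` and `P_w` be the orthogonal projections onto `𝟙` and onto `w = n e₀ - 𝟙`. The Laplacian
of the star is `L = (1 - P₁ - P_w) + n P_w`: it has the eigenvalues `0`, `1`, `n` on three mutually
orthogonal projections, so `L - c` has the eigenvalues `-c`, `1 - c`, `n - c` on them. For a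
combination of orthogonal symmetric idempotents, `|∑ aₖ Eₖ| = ∑ |aₖ| Eₖ`, because the right-hand
side is positive semidefinite with square `∑ aₖ² Eₖ`. With `c = 2m/n = 2(n - 1)/n`, the diagonal
of `c P₁ + (c - 1)(1 - P₁ - P_w) + (n - c) P_w` gives the vertex energies.
-/

open Matrix BigOperators Finset

/-- The square root of a positive semidefinite matrix, as `PosSemidef.sqrt` was defined in the
older Mathlib. -/
noncomputable def posSemidefSqrt {n : ℕ} {A : Matrix (Fin n) (Fin n) ℝ} (hA : A.PosSemidef) :
    Matrix (Fin n) (Fin n) ℝ :=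
  hA.1.eigenvectorUnitary.1 * diagonal ((↑) ∘ Real.sqrt ∘ hA.1.eigenvalues) *
    (star hA.1.eigenvectorUnitary : Matrix (Fin n) (Fin n) ℝ)

/-- The absolute value of a real matrix `B`, defined as `(B * Bᵀ)^(1/2)`. -/
noncomputable def matAbs {n : ℕ} (B : Matrix (Fin n) (Fin n) ℝ) : Matrix (Fin n) (Fin n) ℝ :=
  posSemidefSqrt (Matrix.conjTranspose_eq_transpose_of_trivial B ▸
    Matrix.posSemidef_self_mul_conjTranspose B : (B * Bᵀ).PosSemidef)

/-- The (adjacency) energy of the vertex `i` of the graph `G`: `|A|_{ii}`. -/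
noncomputable def vertexEnergy {n : ℕ} (G : SimpleGraph (Fin n)) [DecidableRel G.Adj]
    (i : Fin n) : ℝ :=
  matAbs (G.adjMatrix ℝ) i i

/-- The Laplacian energy of the vertex `i` of the graph `G`: `(|L - (2m/n) I|)_{ii}`. -/
noncomputable def vertexLapEnergy {n : ℕ} (G : SimpleGraph (Fin n)) [DecidableRel G.Adj]
    (i : Fin n) : ℝ :=
  matAbs (G.lapMatrix ℝ - ((2 * (G.edgeFinset.card : ℝ)) / n) • 1) i i

/-- The normalized Laplacian `𝓛 = I - D^{-1/2} A D^{-1/2}` of the graph `G`. -/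
noncomputable def normLap {n : ℕ} (G : SimpleGraph (Fin n)) [DecidableRel G.Adj] :
    Matrix (Fin n) (Fin n) ℝ :=
  1 - Matrix.diagonal (fun i => (Real.sqrt (G.degree i))⁻¹) * G.adjMatrix ℝ *
      Matrix.diagonal (fun i => (Real.sqrt (G.degree i))⁻¹)

/-- The normalized Laplacian energy of the vertex `i` of the graph `G`: `(|𝓛 - I|)_{ii}`. -/
noncomputable def vertexNormLapEnergy {n : ℕ} (G : SimpleGraph (Fin n)) [DecidableRel G.Adj]
    (i : Fin n) : ℝ :=
  matAbs (normLap G - 1) i i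

/-- The star graph on `Fin n`: the vertex `0` is joined to every other vertex,
and there are no other edges. -/
def starGraph (n : ℕ) : SimpleGraph (Fin n) where
  Adj v w := v ≠ w ∧ (v.val = 0 ∨ w.val = 0)
  symm := ⟨fun _ _ ⟨h1, h2⟩ => ⟨h1.symm, h2.symm⟩⟩
  loopless := ⟨fun _ h => h.1 rfl⟩

instance (n : ℕ) : DecidableRel (starGraph n).Adj := fun v w =>
  inferInstanceAs (Decidable (v ≠ w ∧ (v.val = 0 ∨ w.val = 0)))

open scoped MatrixOrder in
theorem posSemidefSqrt_eq_cfc_sqrt {n : ℕ} {A : Matrix (Fin n) (Fin n) ℝ} (hA : A.PosSemidef) :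
    posSemidefSqrt hA = cfc Real.sqrt A := by
  rw [hA.1.cfc_eq]
  simp only [posSemidefSqrt, IsHermitian.cfc, RCLike.ofReal_real_eq_id, CompTriple.comp_eq,
    Unitary.conjStarAlgAut_apply]
  rfl

open scoped MatrixOrder in
theorem matAbs_eq_of_mul_self {n : ℕ} {B S : Matrix (Fin n) (Fin n) ℝ} (hS : S.PosSemidef)
    (h : S * S = B * Bᵀ) : matAbs B = S := by
  have hBB : 0 ≤ B * Bᵀ := h ▸ IsSelfAdjoint.mul_self_nonneg hS.isHermitian
  rw [matAbs, posSemidefSqrt_eq_cfc_sqrt, ← cfcₙ_eq_cfc, ← CFC.sqrt_eq_real_sqrt _ hBB,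
    CFC.sqrt_eq_iff _ _ hBB hS.nonneg, h]

theorem OrthogonalIdempotents.sum_smul_mul_sum_smul {R A κ : Type*} [CommSemiring R] [Semiring A]
    [Algebra R A] [Fintype κ] {E : κ → A} (hE : OrthogonalIdempotents E) (a b : κ → R) :
    (∑ k, a k • E k) * (∑ k, b k • E k) = ∑ k, (a k * b k) • E k := by
  classical
  simp [Finset.sum_mul, Finset.mul_sum, hE.mul_eq, smul_smul, mul_comm]

open scoped MatrixOrder in
theorem matAbs_sum_smul {n : ℕ} {κ : Type*} [Fintype κ] {E : κ → Matrix (Fin n) (Fin n) ℝ}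
    (hE : OrthogonalIdempotents E) (hE' : ∀ k, IsSelfAdjoint (E k)) (a : κ → ℝ) :
    matAbs (∑ k, a k • E k) = ∑ k, |a k| • E k := by
  have hS : (∑ k, |a k| • E k).PosSemidef := posSemidef_sum _ fun k _ =>
    (nonneg_iff_posSemidef.mp (IsStarProjection.nonneg ⟨hE.idem k, hE' k⟩)).smul (abs_nonneg _)
  have hsymm : (∑ k, a k • E k)ᵀ = ∑ k, a k • E k := by
    rw [← conjTranspose_eq_transpose_of_trivial]
    exact isSelfAdjoint_sum _ fun k _ => (IsSelfAdjoint.all (a k)).smul (hE' k)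
  apply matAbs_eq_of_mul_self hS
  simp only [hsymm, hE.sum_smul_mul_sum_smul, abs_mul_abs_self]

section RankOneProj

variable {m : Type*} [Fintype m]

-- For `u = 0` this is `0`, since `0⁻¹ = 0`.
noncomputable def rankOneProj (u : m → ℝ) : Matrix m m ℝ := (u ⬝ᵥ u)⁻¹ • vecMulVec u u

theorem rankOneProj_apply (u : m → ℝ) (i j : m) : rankOneProj u i j = u i * u j / (u ⬝ᵥ u) := by
  simp [rankOneProj, vecMulVec_apply, div_eq_inv_mul]

theorem rankOneProj_mul_rankOneProj (u w : m → ℝ) :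
    rankOneProj u * rankOneProj w = ((u ⬝ᵥ u)⁻¹ * (w ⬝ᵥ w)⁻¹ * (u ⬝ᵥ w)) • vecMulVec u w := by
  simp only [rankOneProj, smul_mul_smul_comm, vecMulVec_mul_vecMulVec, vecMulVec_smul, smul_smul]

theorem isIdempotentElem_rankOneProj (u : m → ℝ) : IsIdempotentElem (rankOneProj u) := by
  rw [IsIdempotentElem, rankOneProj_mul_rankOneProj, rankOneProj]
  rcases eq_or_ne (u ⬝ᵥ u) 0 with h | h
  · simp [h]
  · rw [mul_assoc, inv_mul_cancel₀ h, mul_one]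

theorem rankOneProj_mul_eq_zero {u w : m → ℝ} (h : u ⬝ᵥ w = 0) :
    rankOneProj u * rankOneProj w = 0 := by
  simp [rankOneProj_mul_rankOneProj, h]

theorem isSelfAdjoint_rankOneProj (u : m → ℝ) : IsSelfAdjoint (rankOneProj u) := by
  ext i j
  simp [rankOneProj_apply, mul_comm]

end RankOneProj

section StarGraph

variable {n : ℕ} [NeZero n]

theorem starGraph_adj_iff {v w : Fin n} :
    (starGraph n).Adj v w ↔ v ≠ w ∧ (v = 0 ∨ w = 0) := by
  simp only [starGraph, Fin.val_eq_zero_iff]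

theorem degree_starGraph_zero : (starGraph n).degree 0 = n - 1 := by
  have : (starGraph n).neighborFinset 0 = univ.erase 0 := by
    ext w
    simp [starGraph_adj_iff, ne_comm]
  rw [← SimpleGraph.card_neighborFinset_eq_degree, this, card_erase_of_mem (mem_univ _),
    card_univ, Fintype.card_fin]

theorem degree_starGraph_of_ne_zero {v : Fin n} (hv : v ≠ 0) : (starGraph n).degree v = 1 := by
  have : (starGraph n).neighborFinset v = {0} := by
    ext w
    simp only [SimpleGraph.mem_neighborFinset, starGraph_adj_iff, mem_singleton]
    constructor
    · rintro ⟨-, h | h⟩ <;> tauto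
    · rintro rfl
      exact ⟨hv, Or.inr rfl⟩
  rw [← SimpleGraph.card_neighborFinset_eq_degree, this, card_singleton]

theorem card_edgeFinset_starGraph : #(starGraph n).edgeFinset = n - 1 := by
  have h := (starGraph n).sum_degrees_eq_twice_card_edges
  rw [← add_sum_erase _ _ (mem_univ 0), degree_starGraph_zero,
    sum_congr rfl fun v hv => degree_starGraph_of_ne_zero (ne_of_mem_erase hv)] at h
  simp only [sum_const, card_erase_of_mem (mem_univ _), card_univ, Fintype.card_fin,
    smul_eq_mul, mul_one] at h
  omega

variable (n) in
noncomputable def starLapEigenvector : Fin n → ℝ := Pi.single 0 (n : ℝ) - 1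

theorem starLapEigenvector_zero : starLapEigenvector n 0 = n - 1 := by
  simp [starLapEigenvector]

theorem starLapEigenvector_of_ne_zero {v : Fin n} (hv : v ≠ 0) : starLapEigenvector n v = -1 := by
  simp [starLapEigenvector, hv]

theorem one_dotProduct_starLapEigenvector : 1 ⬝ᵥ starLapEigenvector n = 0 := by
  simp [starLapEigenvector, dotProduct_sub]

theorem starLapEigenvector_dotProduct_self :
    starLapEigenvector n ⬝ᵥ starLapEigenvector n = n * (n - 1) := by
  simp only [starLapEigenvector, dotProduct_sub, sub_dotProduct, dotProduct_single,
    single_dotProduct, Pi.sub_apply, Pi.single_eq_same, Pi.one_apply, one_dotProduct_one,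
    Fintype.card_fin]
  ring

theorem lapMatrix_starGraph (hn : 1 < n) :
    (starGraph n).lapMatrix ℝ =
      1 - rankOneProj 1 + ((n : ℝ) - 1) • rankOneProj (starLapEigenvector n) := by
  have hn₀ : (n : ℝ) ≠ 0 := NeZero.ne _
  have hn₁ : (n : ℝ) - 1 ≠ 0 := sub_ne_zero.mpr (by exact_mod_cast hn.ne')
  have hQ (x : ℝ) : ((n : ℝ) - 1) * (x / (n * (n - 1))) = x / n := by field_simp
  ext i j
  simp only [SimpleGraph.lapMatrix, SimpleGraph.degMatrix, Matrix.sub_apply, Matrix.add_apply,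
    Matrix.smul_apply, diagonal_apply, SimpleGraph.adjMatrix_apply, one_apply, rankOneProj_apply,
    starLapEigenvector_dotProduct_self, one_dotProduct_one, Fintype.card_fin, starGraph_adj_iff,
    Pi.one_apply, mul_one, smul_eq_mul, hQ]
  rcases eq_or_ne i 0 with rfl | hi <;> rcases eq_or_ne j 0 with rfl | hj
  · simp only [↓reduceIte, ne_eq, not_true_eq_false, false_and, degree_starGraph_zero,
      starLapEigenvector_zero, Nat.cast_sub NeZero.one_le, Nat.cast_one]
    field_simp
    ring
  · simp only [hj.symm, hj, ↓reduceIte, ne_eq, not_false_eq_true, or_false, and_self,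
      starLapEigenvector_zero, starLapEigenvector_of_ne_zero]
    field_simp
    ring
  · simp only [hi, ↓reduceIte, ne_eq, not_false_eq_true, or_true, and_self,
      starLapEigenvector_zero, starLapEigenvector_of_ne_zero]
    field_simp
    ring
  · rcases eq_or_ne i j with rfl | hij
    · simp only [hi, ↓reduceIte, ne_eq, not_true_eq_false, false_and,
        degree_starGraph_of_ne_zero hi, starLapEigenvector_of_ne_zero hi, Nat.cast_one]
      field_simp
      ring
    · simp only [hij, hi, hj, ↓reduceIte, ne_eq, not_false_eq_true, or_self, and_false,
        starLapEigenvector_of_ne_zero]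
      field_simp
      ring

theorem matAbs_lapMatrix_starGraph_sub_smul_one (hn : 1 < n) (c : ℝ) :
    matAbs ((starGraph n).lapMatrix ℝ - c • 1) =
      |1 - c| • (1 - (rankOneProj 1 + rankOneProj (starLapEigenvector n))) +
        |c| • rankOneProj 1 + |(n : ℝ) - c| • rankOneProj (starLapEigenvector n) := by
  set P : Matrix (Fin n) (Fin n) ℝ := rankOneProj 1
  set Q := rankOneProj (starLapEigenvector n)
  have hPQ : OrthogonalIdempotents ![P, Q] := by
    refine ⟨by simp [Fin.forall_fin_two, P, Q, isIdempotentElem_rankOneProj], ?_⟩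
    have hPQ₀ : 1 ⬝ᵥ starLapEigenvector n = 0 := one_dotProduct_starLapEigenvector
    have hQP₀ : starLapEigenvector n ⬝ᵥ 1 = 0 := by rwa [dotProduct_comm]
    simp [Pairwise, Fin.forall_fin_two, P, Q, rankOneProj_mul_eq_zero hPQ₀,
      rankOneProj_mul_eq_zero hQP₀]
  have hPQ' : ∀ k, IsSelfAdjoint (![P, Q] k) := by
    simp [Fin.forall_fin_two, P, Q, isSelfAdjoint_rankOneProj]
  have hF := (CompleteOrthogonalIdempotents.option hPQ).toOrthogonalIdempotents
  have hF' : ∀ o, IsSelfAdjoint (Option.elim o (1 - ∑ k, ![P, Q] k) ![P, Q]) := by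
    rintro (_ | k)
    · exact .sub (.one _) (isSelfAdjoint_sum _ fun k _ => hPQ' k)
    · exact hPQ' k
  have h := matAbs_sum_smul hF hF' (Option.elim · (1 - c) ![-c, n - c])
  simp only [Fintype.sum_option, Fin.sum_univ_two, Option.elim_none, Option.elim_some,
    Matrix.cons_val_zero, Matrix.cons_val_one, abs_neg] at h
  rw [lapMatrix_starGraph hn, add_assoc, ← h]
  congr 1
  module

theorem vertexLapEnergy_starGraph (hn : 1 < n) (v : Fin n) :
    vertexLapEnergy (starGraph n) v =
      ((n : ℝ) - 1) / n +
        ((n : ℝ) ^ 2 - 3 * n + 4) * starLapEigenvector n v ^ 2 / (n ^ 2 * (n - 1)) := by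
  have hn' : (2 : ℝ) ≤ n := by exact_mod_cast hn
  have hn₀ : (n : ℝ) ≠ 0 := by positivity
  have hn₁ : (n : ℝ) - 1 ≠ 0 := by linarith
  have hc₁ : 1 ≤ 2 * ((n : ℝ) - 1) / n := by rw [le_div_iff₀ (by positivity)]; linarith
  have hc₂ : 2 * ((n : ℝ) - 1) / n ≤ n := by rw [div_le_iff₀ (by positivity)]; nlinarith
  rw [vertexLapEnergy, card_edgeFinset_starGraph, Nat.cast_sub NeZero.one_le, Nat.cast_one,
    matAbs_lapMatrix_starGraph_sub_smul_one hn, abs_of_nonpos (by linarith),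
    abs_of_nonneg (by linarith), abs_of_nonneg (by linarith)]
  simp only [Matrix.add_apply, Matrix.smul_apply, Matrix.sub_apply, one_apply_eq, rankOneProj_apply,
    Pi.one_apply, one_dotProduct_one, starLapEigenvector_dotProduct_self, Fintype.card_fin,
    smul_eq_mul]
  field_simp
  ring

end StarGraph

theorem stmt19 (n : ℕ) (hn : 2 ≤ n) :
    vertexLapEnergy (starGraph n) ⟨0, by omega⟩ =
        ((n : ℝ) - 1) * ((n : ℝ) ^ 2 - 2 * (n : ℝ) + 4) / (n : ℝ) ^ 2 ∧
      ∀ k : Fin n, k.val ≠ 0 →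
        vertexLapEnergy (starGraph n) k =
          ((n : ℝ) ^ 3 - (n : ℝ) ^ 2 - 2 * (n : ℝ) + 4) / ((n : ℝ) ^ 2 * ((n : ℝ) - 1)) := by
  have : NeZero n := ⟨by omega⟩
  have hn₀ : (n : ℝ) ≠ 0 := NeZero.ne _
  have hn₁ : (n : ℝ) - 1 ≠ 0 := sub_ne_zero.mpr (by exact_mod_cast (by omega : n ≠ 1))
  refine ⟨?_, fun k hk => ?_⟩
  · rw [show (⟨0, _⟩ : Fin n) = 0 from Fin.ext (Fin.val_zero n).symm,
      vertexLapEnergy_starGraph (by omega), starLapEigenvector_zero]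
    field_simp
    ring
  · rw [vertexLapEnergy_starGraph (by omega),
      starLapEigenvector_of_ne_zero (Fin.val_ne_zero_iff.mp hk)]
    field_simp
    ring
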